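/- Let M be a bounded below A(1)-module and let k be an integer. If N is a direct summand of M^k all of whose elements have degree at most k+1 (i.e., N_j = 0 for j > k+1), then N splits off as a direct summand of M. -/

import Mathlib

/-- A graded module over the subalgebra `A(1)` of the mod 2 Steenrod algebra:
an internally `ℤ`-graded `𝔽₂`-vector space equipped with operations `Sq¹` (degree `1`)
and `Sq²` (degree `2`) satisfying `Sq¹Sq¹ = 0` and `Sq²Sq² = Sq¹Sq²Sq¹`. -/
structure A1Module where
  carrier : Type
  [acg : AddCommGroup carrier]
  [mod : Module (ZMod 2) carrier]
  gr : ℤ → Submodule (ZMod 2) carrier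
  indep : iSupIndep gr
  total : ⨆ k : ℤ, gr k = ⊤
  sq1 : carrier →ₗ[ZMod 2] carrier
  sq2 : carrier →ₗ[ZMod 2] carrier
  sq1_gr : ∀ k : ℤ, ∀ x ∈ gr k, sq1 x ∈ gr (k + 1)
  sq2_gr : ∀ k : ℤ, ∀ x ∈ gr k, sq2 x ∈ gr (k + 2)
  sq1_sq1 : ∀ x, sq1 (sq1 x) = 0
  sq2_sq2 : ∀ x, sq2 (sq2 x) = sq1 (sq2 (sq1 x))

attribute [instance] A1Module.acg A1Module.mod

namespace A1Module

variable (M : A1Module)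

/-- The Milnor primitive `Q₁ = Sq¹Sq² + Sq²Sq¹`. -/
def Q1 : M.carrier →ₗ[ZMod 2] M.carrier := M.sq1 ∘ₗ M.sq2 + M.sq2 ∘ₗ M.sq1

/-- `M` is bounded below: `M_k = 0` for all `k` below some bound. -/
def BoundedBelow : Prop := ∃ n : ℤ, ∀ k : ℤ, k < n → M.gr k = ⊥

/-- `M` is of finite type: each graded piece is a finite-dimensional `𝔽₂`-vector space. -/
def FiniteType : Prop := ∀ k : ℤ, FiniteDimensional (ZMod 2) ↥(M.gr k)

/-- `M` is finite: finite type and only finitely many nonzero graded pieces. -/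
def FiniteModule : Prop := M.FiniteType ∧ {k : ℤ | M.gr k ≠ ⊥}.Finite

/-- `M` is `Q₀`-local: the `Q₁`-Margolis homology vanishes in every degree,
i.e. every homogeneous `Q₁`-cycle is a `Q₁`-boundary. -/
def Q0Local : Prop :=
  ∀ k : ℤ, LinearMap.ker M.Q1 ⊓ M.gr k ≤ Submodule.map M.Q1 (M.gr (k - 3))

/-- `p` is a (graded) `A(1)`-submodule of `M`. -/
def IsA1Sub (p : Submodule (ZMod 2) M.carrier) : Prop :=
  (∀ x ∈ p, M.sq1 x ∈ p) ∧ (∀ x ∈ p, M.sq2 x ∈ p) ∧ p = ⨆ k : ℤ, p ⊓ M.gr k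

/-- `p` is a direct summand of `M` in the category of graded `A(1)`-modules. -/
def IsSummand (p : Submodule (ZMod 2) M.carrier) : Prop :=
  M.IsA1Sub p ∧ ∃ q, M.IsA1Sub q ∧ p ⊓ q = ⊥ ∧ p ⊔ q = ⊤

/-- The action of the eight monomial basis elements
`1, Sq¹, Sq², Sq¹Sq², Sq²Sq¹, Sq¹Sq²Sq¹, Sq²Sq¹Sq², Sq¹Sq²Sq¹Sq²` of `A(1)`. -/
def w8 : Fin 8 → (M.carrier →ₗ[ZMod 2] M.carrier) :=
  ![LinearMap.id, M.sq1, M.sq2, M.sq1 ∘ₗ M.sq2, M.sq2 ∘ₗ M.sq1,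
    M.sq1 ∘ₗ M.sq2 ∘ₗ M.sq1, M.sq2 ∘ₗ M.sq1 ∘ₗ M.sq2,
    M.sq1 ∘ₗ M.sq2 ∘ₗ M.sq1 ∘ₗ M.sq2]

/-- The action of the four monomials `1, Sq², Sq¹Sq², Sq²Sq¹Sq²`, which give an `𝔽₂`-basis of
`A(1)//A(0)` applied to a generator. -/
def w4 : Fin 4 → (M.carrier →ₗ[ZMod 2] M.carrier) :=
  ![LinearMap.id, M.sq2, M.sq1 ∘ₗ M.sq2, M.sq2 ∘ₗ M.sq1 ∘ₗ M.sq2]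

/-- `p` is a free `A(1)`-submodule of `M`: it has homogeneous elements `g i` such that the
elements `Sqᴿ (g i)`, for `Sqᴿ` running over the monomial basis of `A(1)`, form a basis of `p`.
This says exactly that `p ≅ ⊕ᵢ Σ^{d i} A(1)` as graded `A(1)`-modules. -/
def IsFreeOn (p : Submodule (ZMod 2) M.carrier) : Prop :=
  ∃ (I : Type) (d : I → ℤ) (g : I → M.carrier),
    (∀ i, g i ∈ M.gr (d i)) ∧
    LinearIndependent (ZMod 2) (fun q : I × Fin 8 => M.w8 q.2 (g q.1)) ∧
    Submodule.span (ZMod 2) (Set.range fun q : I × Fin 8 => M.w8 q.2 (g q.1)) = p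

/-- `M` is reduced: it has no nonzero free direct summand. -/
def Reduced : Prop := ∀ p, M.IsSummand p → M.IsFreeOn p → p = ⊥

/-- `p` is a flock of seagulls `⊕ᵢ Σ^{α i} Υ_{n i}` inside `M`:
there are chains of elements `y i 0, y i 1, …` (of length `n i`, possibly infinite), with
`y i j` homogeneous of degree `α i + 4j`, linked by `Sq¹ y_{i,j+1} = Sq²Sq¹Sq² y_{i,j}` and with
`Sq¹ y_{i,0} = 0`, such that the elements `Sqᴿ y_{i,j}`, for `Sqᴿ ∈ {1, Sq², Sq¹Sq², Sq²Sq¹Sq²}`,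
form an `𝔽₂`-basis of `p`.  This says exactly that `p ≅ ⊕ᵢ Σ^{α i} Υ_{n i}`
as graded `A(1)`-modules. -/
def FlockBasisOn (p : Submodule (ZMod 2) M.carrier) (I : Type) (α : I → ℤ) (n : I → ℕ∞) :
    Prop :=
  ∃ y : I → ℕ → M.carrier,
    (∀ (i : I) (j : ℕ), (j : ℕ∞) < n i → y i j ∈ M.gr (α i + 4 * (j : ℤ))) ∧
    (∀ i : I, M.sq1 (y i 0) = 0) ∧
    (∀ (i : I) (j : ℕ), ((j + 1 : ℕ) : ℕ∞) < n i →
      M.sq1 (y i (j + 1)) = M.sq2 (M.sq1 (M.sq2 (y i j)))) ∧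
    LinearIndependent (ZMod 2)
      (fun q : {x : I × ℕ // (x.2 : ℕ∞) < n x.1} × Fin 4 => M.w4 q.2 (y q.1.1.1 q.1.1.2)) ∧
    Submodule.span (ZMod 2)
      (Set.range fun q : {x : I × ℕ // (x.2 : ℕ∞) < n x.1} × Fin 4 =>
        M.w4 q.2 (y q.1.1.1 q.1.1.2)) = p

/-- `M` is (isomorphic to) a flock of seagulls `⊕ᵢ Σ^{α i} Υ_{n i}`. -/
def IsFlock : Prop :=
  ∃ (I : Type) (α : I → ℤ) (n : I → ℕ∞), (∀ i, 1 ≤ n i) ∧ M.FlockBasisOn ⊤ I α n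

/-- `M^k`: the smallest `A(1)`-submodule of `M` containing all homogeneous elements of
degree at most `k`. -/
def below (k : ℤ) : Submodule (ZMod 2) M.carrier :=
  sInf {p | (∀ x ∈ p, M.sq1 x ∈ p) ∧ (∀ x ∈ p, M.sq2 x ∈ p) ∧ ∀ j ≤ k, M.gr j ≤ p}

/-- The `A(1)`-submodule of `M` generated by a set. -/
def a1span (s : Set M.carrier) : Submodule (ZMod 2) M.carrier :=
  sInf {p | (∀ x ∈ p, M.sq1 x ∈ p) ∧ (∀ x ∈ p, M.sq2 x ∈ p) ∧ s ⊆ p}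

/-- `p` is a finite submodule: each graded piece is finite-dimensional and all but finitely
many graded pieces vanish. -/
def FiniteOn (p : Submodule (ZMod 2) M.carrier) : Prop :=
  (∀ k : ℤ, FiniteDimensional (ZMod 2) ↥(p ⊓ M.gr k)) ∧ {k : ℤ | p ⊓ M.gr k ≠ ⊥}.Finite

end A1Module

/-- Isomorphism of graded `A(1)`-modules. -/
def A1Iso (M N : A1Module) : Prop :=
  ∃ e : M.carrier ≃ₗ[ZMod 2] N.carrier,
    (∀ x, e (M.sq1 x) = N.sq1 (e x)) ∧
    (∀ x, e (M.sq2 x) = N.sq2 (e x)) ∧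
    ∀ k : ℤ, ∀ x ∈ M.gr k, e x ∈ N.gr k


namespace A1Module

variable (M : A1Module)

/-- Degrees of the eight monomial basis elements of `A(1)`. -/
def d8 : Fin 8 → ℤ := ![0, 1, 2, 3, 3, 4, 5, 6]

lemma d8_nonneg (r : Fin 8) : 0 ≤ d8 r := by
  fin_cases r <;> decide

lemma d8_pos (r : Fin 8) (h : r ≠ 0) : 1 ≤ d8 r := by
  fin_cases r <;> first | exact absurd rfl h | decide

lemma w8_zero : M.w8 0 = LinearMap.id := rfl

lemma w8_grd (r : Fin 8) (i : ℤ) (x : M.carrier) (hx : x ∈ M.gr i) :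
    M.w8 r x ∈ M.gr (i + d8 r) := by
  have h1 := M.sq1_gr
  have h2 := M.sq2_gr
  fin_cases r
  · have h : x ∈ M.gr (i + 0) := by rwa [add_zero]
    exact h
  · exact h1 i x hx
  · exact h2 i x hx
  · have h := h1 _ _ (h2 i x hx)
    rw [show i + 2 + 1 = i + (3 : ℤ) by ring] at h
    exact h
  · have h := h2 _ _ (h1 i x hx)
    rw [show i + 1 + 2 = i + (3 : ℤ) by ring] at h
    exact h
  · have h := h1 _ _ (h2 _ _ (h1 i x hx))
    rw [show i + 1 + 2 + 1 = i + (4 : ℤ) by ring] at h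
    exact h
  · have h := h2 _ _ (h1 _ _ (h2 i x hx))
    rw [show i + 2 + 1 + 2 = i + (5 : ℤ) by ring] at h
    exact h
  · have h := h1 _ _ (h2 _ _ (h1 _ _ (h2 i x hx)))
    rw [show i + 2 + 1 + 2 + 1 = i + (6 : ℤ) by ring] at h
    exact h

lemma sq1_w8 (r : Fin 8) (x : M.carrier) :
    M.sq1 (M.w8 r x) = 0 ∨ ∃ r' : Fin 8, M.sq1 (M.w8 r x) = M.w8 r' x := by
  fin_cases r
  · exact Or.inr ⟨1, rfl⟩
  · exact Or.inl (M.sq1_sq1 x)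
  · exact Or.inr ⟨3, rfl⟩
  · exact Or.inl (M.sq1_sq1 (M.sq2 x))
  · exact Or.inr ⟨5, rfl⟩
  · exact Or.inl (M.sq1_sq1 (M.sq2 (M.sq1 x)))
  · exact Or.inr ⟨7, rfl⟩
  · exact Or.inl (M.sq1_sq1 (M.sq2 (M.sq1 (M.sq2 x))))

lemma sq2_w8 (r : Fin 8) (x : M.carrier) :
    M.sq2 (M.w8 r x) = 0 ∨ ∃ r' : Fin 8, M.sq2 (M.w8 r x) = M.w8 r' x := by
  fin_cases r
  · exact Or.inr ⟨2, rfl⟩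
  · exact Or.inr ⟨4, rfl⟩
  · exact Or.inr ⟨5, M.sq2_sq2 x⟩
  · exact Or.inr ⟨6, rfl⟩
  · exact Or.inl (by
      show M.sq2 (M.sq2 (M.sq1 x)) = 0
      rw [M.sq2_sq2 (M.sq1 x), M.sq1_sq1 x, map_zero, map_zero])
  · exact Or.inr ⟨7, by
      show M.sq2 (M.sq1 (M.sq2 (M.sq1 x))) = M.sq1 (M.sq2 (M.sq1 (M.sq2 x)))
      rw [← M.sq2_sq2 x, M.sq2_sq2 (M.sq2 x)]⟩
  · exact Or.inl (by
      show M.sq2 (M.sq2 (M.sq1 (M.sq2 x))) = 0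
      rw [M.sq2_sq2 (M.sq1 (M.sq2 x)), M.sq1_sq1 (M.sq2 x), map_zero, map_zero])
  · exact Or.inl (by
      show M.sq2 (M.sq1 (M.sq2 (M.sq1 (M.sq2 x)))) = 0
      rw [← M.sq2_sq2 (M.sq2 x), M.sq2_sq2 (M.sq2 (M.sq2 x)), M.sq2_sq2 x,
        M.sq1_sq1 (M.sq2 (M.sq1 x)), map_zero, map_zero])

theorem isInternal : DirectSum.IsInternal M.gr :=
  (DirectSum.isInternal_submodule_iff_iSupIndep_and_iSup_eq_top M.gr).mpr ⟨M.indep, M.total⟩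

/-- The decomposition equivalence. -/
noncomputable def projE : (DirectSum ℤ fun j : ℤ => ↥(M.gr j)) ≃ₗ[ZMod 2] M.carrier :=
  LinearEquiv.ofBijective (DirectSum.coeLinearMap M.gr) M.isInternal

/-- The projection onto the degree `j` component. -/
noncomputable def proj (j : ℤ) (x : M.carrier) : M.carrier := (M.projE.symm x j : M.carrier)

theorem proj_add (j : ℤ) (x y : M.carrier) :
    M.proj j (x + y) = M.proj j x + M.proj j y := by
  simp [proj, map_add, DirectSum.add_apply]

theorem proj_zero (j : ℤ) : M.proj j 0 = 0 := by simp [proj]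

theorem proj_same {j : ℤ} {x : M.carrier} (hx : x ∈ M.gr j) : M.proj j x = x := by
  rw [proj, projE, M.isInternal.ofBijective_coeLinearMap_of_mem hx]

theorem proj_ne {i j : ℤ} (hij : i ≠ j) {x : M.carrier} (hx : x ∈ M.gr i) :
    M.proj j x = 0 := by
  rw [proj, projE, M.isInternal.ofBijective_coeLinearMap_of_mem_ne hij hx]
  rfl

theorem eq_zero_of_proj (x : M.carrier) (h : ∀ j, M.proj j x = 0) : x = 0 := by
  have h0 : M.projE.symm x = 0 := DFinsupp.ext fun j => Subtype.ext (h j)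
  calc x = M.projE (M.projE.symm x) := (M.projE.apply_symm_apply x).symm
    _ = 0 := by rw [h0]; exact M.projE.map_zero

theorem proj_mem_of_mem_iSup (P : ℤ → Submodule (ZMod 2) M.carrier)
    (hP : ∀ j, P j ≤ M.gr j) (j : ℤ) (x : M.carrier) (hx : x ∈ ⨆ i, P i) :
    M.proj j x ∈ P j := by
  refine Submodule.iSup_induction (motive := fun y => M.proj j y ∈ P j) P hx
    (fun i y hy => ?_) ?_ ?_
  · show M.proj j y ∈ P j
    by_cases hij : i = j
    · subst hij; rwa [M.proj_same (hP i hy)]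
    · rw [M.proj_ne hij (hP i hy)]; exact zero_mem _
  · show M.proj j (0 : M.carrier) ∈ P j
    rw [M.proj_zero]; exact zero_mem _
  · intro a b ha hb
    show M.proj j (a + b) ∈ P j
    rw [M.proj_add]; exact add_mem ha hb

end A1Module

/-- Lemma 3.18: let `M` be a bounded below `A(1)`-module.  If `N` is a direct summand of `M^k`
all of whose elements have degree at most `k+1` (`N_j = 0` for `j > k+1`), then `N` splits off
as a direct summand of `M`. -/
theorem lem_split (M : A1Module) (hbdd : M.BoundedBelow) (k : ℤ)
    (N : Submodule (ZMod 2) M.carrier) (hN : M.IsA1Sub N) (hNle : N ≤ M.below k)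
    (hsum : ∃ C, M.IsA1Sub C ∧ N ⊓ C = ⊥ ∧ N ⊔ C = M.below k)
    (hdeg : ∀ j : ℤ, k + 1 < j → N ⊓ M.gr j = ⊥) :
    ∃ C', M.IsA1Sub C' ∧ N ⊓ C' = ⊥ ∧ N ⊔ C' = ⊤ := by
  classical
  obtain ⟨C, hC, hNC, hNCk⟩ := hsum
  have hgr_le_below : ∀ j : ℤ, j ≤ k → M.gr j ≤ M.below k :=
    fun j hj => le_sInf fun p hp => hp.2.2 j hj
  have hC_le : C ≤ M.below k := hNCk ▸ le_sup_right
  have hN_le : N ≤ M.below k := hNle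
  -- choose graded complements of `M^k` in each degree
  have hWex : ∀ j : ℤ, ∃ W : Submodule (ZMod 2) M.carrier,
      W ≤ M.gr j ∧ W ⊓ M.below k = ⊥ ∧ (M.below k ⊓ M.gr j) ⊔ W = M.gr j := by
    intro j
    obtain ⟨V, hV⟩ := (Submodule.comap (M.gr j).subtype (M.below k)).exists_isCompl
    refine ⟨V.map (M.gr j).subtype, Submodule.map_subtype_le _ _, ?_, ?_⟩
    · rw [eq_bot_iff]
      rintro x ⟨⟨v, hv, rfl⟩, hx2⟩
      have hv0 : v ∈ (⊥ : Submodule (ZMod 2) ↥(M.gr j)) :=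
        hV.symm.disjoint.le_bot ⟨hv, hx2⟩
      simp only [Submodule.mem_bot] at hv0 ⊢
      simp [hv0]
    · have h1 : Submodule.map (M.gr j).subtype
          (Submodule.comap (M.gr j).subtype (M.below k)) = M.below k ⊓ M.gr j := by
        rw [Submodule.map_comap_eq, Submodule.range_subtype, inf_comm]
      rw [← h1, ← Submodule.map_sup, hV.sup_eq_top, Submodule.map_top,
        Submodule.range_subtype]
  choose W hW1 hW2 hW3 using hWex
  have hWbot : ∀ j : ℤ, j ≤ k → W j = ⊥ := by
    intro j hj
    have h := le_inf (le_refl (W j)) ((hW1 j).trans (hgr_le_below j hj))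
    rw [hW2 j] at h
    exact le_bot_iff.mp h
  -- the complement
  set S : Submodule (ZMod 2) M.carrier :=
    ⨆ q : ℤ × Fin 8, Submodule.map (M.w8 q.2) (W q.1) with hSdef
  set C' : Submodule (ZMod 2) M.carrier := C ⊔ S with hC'def
  have hpiece_le : ∀ (i : ℤ) (r : Fin 8),
      Submodule.map (M.w8 r) (W i) ≤ M.gr (i + A1Module.d8 r) := by
    rintro i r x ⟨w, hw, rfl⟩
    exact M.w8_grd r i w (hW1 i hw)
  have hS_le : S ≤ C' := le_sup_right
  have hC_le' : C ≤ C' := le_sup_left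
  -- closure under sq1 and sq2
  have hS_sq1 : ∀ x ∈ S, M.sq1 x ∈ S := by
    intro x hx
    rw [hSdef] at hx
    refine Submodule.iSup_induction (motive := fun y => M.sq1 y ∈ S) _ hx
      (fun q y hy => ?_) (by simp)
      (fun a b ha hb => by show M.sq1 (a + b) ∈ S; rw [map_add]; exact add_mem ha hb)
    show M.sq1 y ∈ S
    obtain ⟨w, hw, rfl⟩ := hy
    rcases M.sq1_w8 q.2 w with h | ⟨r', h⟩
    · rw [h]; exact zero_mem _
    · rw [h]
      exact Submodule.mem_iSup_of_mem (q.1, r') ⟨w, hw, rfl⟩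
  have hS_sq2 : ∀ x ∈ S, M.sq2 x ∈ S := by
    intro x hx
    rw [hSdef] at hx
    refine Submodule.iSup_induction (motive := fun y => M.sq2 y ∈ S) _ hx
      (fun q y hy => ?_) (by simp)
      (fun a b ha hb => by show M.sq2 (a + b) ∈ S; rw [map_add]; exact add_mem ha hb)
    show M.sq2 y ∈ S
    obtain ⟨w, hw, rfl⟩ := hy
    rcases M.sq2_w8 q.2 w with h | ⟨r', h⟩
    · rw [h]; exact zero_mem _
    · rw [h]
      exact Submodule.mem_iSup_of_mem (q.1, r') ⟨w, hw, rfl⟩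
  have hC'_sq1 : ∀ x ∈ C', M.sq1 x ∈ C' := by
    intro x hx
    obtain ⟨c, hc, s, hs, rfl⟩ := Submodule.mem_sup.mp hx
    rw [map_add]
    exact add_mem (hC_le' (hC.1 c hc)) (hS_le (hS_sq1 s hs))
  have hC'_sq2 : ∀ x ∈ C', M.sq2 x ∈ C' := by
    intro x hx
    obtain ⟨c, hc, s, hs, rfl⟩ := Submodule.mem_sup.mp hx
    rw [map_add]
    exact add_mem (hC_le' (hC.2.1 c hc)) (hS_le (hS_sq2 s hs))
  -- gradedness of C'
  have hC'_gr : C' = ⨆ j : ℤ, C' ⊓ M.gr j := by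
    apply le_antisymm
    · apply sup_le
      · calc C = ⨆ j : ℤ, C ⊓ M.gr j := hC.2.2
          _ ≤ ⨆ j : ℤ, C' ⊓ M.gr j := iSup_mono fun j => inf_le_inf_right _ hC_le'
      · refine iSup_le fun q => ?_
        have h1 : Submodule.map (M.w8 q.2) (W q.1) ≤ C' :=
          le_trans (le_iSup (fun q : ℤ × Fin 8 => Submodule.map (M.w8 q.2) (W q.1)) q) hS_le
        exact le_trans (le_inf h1 (hpiece_le q.1 q.2))
          (le_iSup (fun j => C' ⊓ M.gr j) (q.1 + A1Module.d8 q.2))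
    · exact iSup_le fun j => inf_le_left
  -- N ⊔ C' = ⊤
  have hWC' : ∀ j : ℤ, W j ≤ C' := by
    intro j
    have h0 : Submodule.map (M.w8 0) (W j) = W j := by rw [M.w8_zero, Submodule.map_id]
    calc W j = Submodule.map (M.w8 0) (W j) := h0.symm
      _ ≤ S := le_iSup (fun q : ℤ × Fin 8 => Submodule.map (M.w8 q.2) (W q.1)) (j, 0)
      _ ≤ C' := hS_le
  have htop : N ⊔ C' = ⊤ := by
    rw [eq_top_iff, ← M.total]
    refine iSup_le fun j => ?_
    calc M.gr j = (M.below k ⊓ M.gr j) ⊔ W j := (hW3 j).symm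
      _ ≤ M.below k ⊔ W j := sup_le_sup_right inf_le_left _
      _ = (N ⊔ C) ⊔ W j := by rw [hNCk]
      _ ≤ N ⊔ C' := sup_le (sup_le le_sup_left (hC_le'.trans le_sup_right))
          ((hWC' j).trans le_sup_right)
  -- N ⊓ C' = ⊥
  have hNbot : N ⊓ C' = ⊥ := by
    rw [eq_bot_iff]
    rintro x ⟨hxN, hxC'⟩
    have hxN' : ∀ j : ℤ, M.proj j x ∈ N ⊓ M.gr j := by
      intro j
      have hx2 : x ∈ ⨆ i : ℤ, N ⊓ M.gr i := hN.2.2 ▸ hxN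
      exact M.proj_mem_of_mem_iSup _ (fun i => inf_le_right) j x hx2
    set P : ℤ → Submodule (ZMod 2) M.carrier := fun j =>
      (C ⊓ M.gr j) ⊔ ⨆ r : Fin 8, Submodule.map (M.w8 r) (W (j - A1Module.d8 r)) with hPdef
    have hPle : ∀ j, P j ≤ M.gr j := by
      intro j
      refine sup_le inf_le_right (iSup_le fun r => ?_)
      have h := hpiece_le (j - A1Module.d8 r) r
      rwa [sub_add_cancel] at h
    have hC'P : C' ≤ ⨆ j : ℤ, P j := by
      apply sup_le
      · calc C = ⨆ j : ℤ, C ⊓ M.gr j := hC.2.2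
          _ ≤ ⨆ j : ℤ, P j := iSup_mono fun j => le_sup_left
      · refine iSup_le fun q => ?_
        refine le_trans ?_ (le_iSup P (q.1 + A1Module.d8 q.2))
        have heq : q.1 + A1Module.d8 q.2 - A1Module.d8 q.2 = q.1 := by ring
        calc Submodule.map (M.w8 q.2) (W q.1)
            = Submodule.map (M.w8 q.2) (W (q.1 + A1Module.d8 q.2 - A1Module.d8 q.2)) := by
              rw [heq]
          _ ≤ ⨆ r : Fin 8, Submodule.map (M.w8 r)
              (W (q.1 + A1Module.d8 q.2 - A1Module.d8 r)) :=
              le_iSup (fun r : Fin 8 => Submodule.map (M.w8 r)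
                (W (q.1 + A1Module.d8 q.2 - A1Module.d8 r))) q.2
          _ ≤ P (q.1 + A1Module.d8 q.2) := le_sup_right
    have hxP : ∀ j, M.proj j x ∈ P j :=
      fun j => M.proj_mem_of_mem_iSup P hPle j x (hC'P hxC')
    have hzero : ∀ j, M.proj j x = 0 := by
      intro j
      rcases lt_trichotomy j (k + 1) with hj | hj | hj
      · -- j ≤ k
        have hjk : j ≤ k := by omega
        have hPj : P j ≤ C := by
          refine sup_le inf_le_left (iSup_le fun r => ?_)
          have hb : W (j - A1Module.d8 r) = ⊥ := by
            refine hWbot _ ?_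
            have := A1Module.d8_nonneg r
            omega
          rw [hb, Submodule.map_bot]
          exact bot_le
        have hmem : M.proj j x ∈ N ⊓ C := ⟨(hxN' j).1, hPj (hxP j)⟩
        rw [hNC] at hmem
        simpa using hmem
      · -- j = k + 1
        subst hj
        have hPj : P (k + 1) ≤ (C ⊓ M.gr (k + 1)) ⊔ W (k + 1) := by
          refine sup_le le_sup_left (iSup_le fun r => ?_)
          by_cases hr : r = 0
          · subst hr
            have hd : A1Module.d8 (0 : Fin 8) = 0 := rfl
            rw [hd, sub_zero, M.w8_zero, Submodule.map_id]
            exact le_sup_right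
          · have h1 : 1 ≤ A1Module.d8 r := A1Module.d8_pos r hr
            have hb : W (k + 1 - A1Module.d8 r) = ⊥ := hWbot _ (by omega)
            rw [hb, Submodule.map_bot]
            exact bot_le
        obtain ⟨c, hc, w, hw, hsum'⟩ := Submodule.mem_sup.mp (hPj (hxP (k + 1)))
        have hwbelow : w ∈ M.below k := by
          have hweq : w = M.proj (k + 1) x - c := by rw [← hsum']; abel
          rw [hweq]
          exact sub_mem (hN_le (hxN' (k + 1)).1) (hC_le hc.1)
        have hw0 : w = 0 := by
          have hmem : w ∈ W (k + 1) ⊓ M.below k := ⟨hw, hwbelow⟩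
          rw [hW2 (k + 1)] at hmem
          simpa using hmem
        have hmem : M.proj (k + 1) x ∈ N ⊓ C :=
          ⟨(hxN' (k + 1)).1, by rw [← hsum', hw0, add_zero]; exact hc.1⟩
        rw [hNC] at hmem
        simpa using hmem
      · have hmem := hxN' j
        rw [hdeg j hj] at hmem
        simpa using hmem
    have hx0 : x = 0 := M.eq_zero_of_proj x hzero
    simp [hx0]
  exact ⟨C', ⟨hC'_sq1, hC'_sq2, hC'_gr⟩, hNbot, htop⟩
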